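/- arXiv:1804.05126 — 5 statements merged into one kernel-verified Lean document; each statement's English description precedes it below -/
import Mathlib

section
/- Let A be a real N×N matrix, let b_0, b_1, …, b_p be vectors in ℝ^N, let B be the N×p matrix whose k-th column is b_{p+1−k} (i.e. B = [b_p, …, b_2, b_1]), let K be the p×p nilpotent matrix with K(i, i+1) = 1 for 1 ≤ i ≤ p−1 and all other entries zero, let Ã be the (N+p)×(N+p) block matrix [[A, B], [0, K]], let v = [b_0; e_p] ∈ ℝ^{N+p} where e_p is the p-th standard basis vector of ℝ^p, and let τ ∈ ℝ. Then the first N components of w = e^{τÃ} v are given by w(1:N) = Σ_{j=0}^{p} τ^j φ_j(τA) b_j. -/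
/-!
Expand `exp (τ • Ã)` as a power series. The upper-right block of `Ãⁿ` is
`∑_{k<n} A^(n-1-k) B Kᵏ`, and `Kᵏ e_p = e_(p-k)` picks out the column `b_(k+1)` of `B`, so the
upper half of `Ãⁿ v` is `∑_{j ≤ min n p} A^(n-j) b_j`. On the other side, integrating the
exponential series termwise against the Beta integral
`∫₀¹ θ^(j-1) (1-θ)^m dθ = (j-1)! m! / (m+j)!` gives `φ_j(M) = ∑_m M^m / (m+j)!`. Both sides are
then the same series `∑_n τⁿ/n! ∑_{j ≤ min n p} A^(n-j) b_j`.
-/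

open Matrix MeasureTheory
open scoped Nat

attribute [local instance] Matrix.normedAddCommGroup Matrix.normedSpace

/-- The matrix `φ`-functions: `φ₀(M) = e^M` and
`φ_k(M) = ∫_0^1 e^{(1-θ)M} θ^{k-1}/(k-1)! dθ` for `k ≥ 1`. -/
noncomputable def phi {n : ℕ} (k : ℕ) (M : Matrix (Fin n) (Fin n) ℝ) :
    Matrix (Fin n) (Fin n) ℝ :=
  if k = 0 then NormedSpace.exp M
  else ∫ θ in (0:ℝ)..1, ((θ ^ (k - 1) / (k - 1)! : ℝ)) • NormedSpace.exp ((1 - θ) • M)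


/-- The `p × p` nilpotent matrix with `K(i, i+1) = 1` and all other entries zero. -/
noncomputable def Ktilde (p : ℕ) : Matrix (Fin p) (Fin p) ℝ :=
  Matrix.of fun i j => if (j : ℕ) = (i : ℕ) + 1 then 1 else 0

/-- The `N × p` matrix whose `k`-th column is `b_{p+1-k}`, i.e. `B = [b_p, …, b_2, b_1]`. -/
noncomputable def Bmat {N : ℕ} (p : ℕ) (b : ℕ → Fin N → ℝ) : Matrix (Fin N) (Fin p) ℝ :=
  Matrix.of fun i j => b (p - (j : ℕ)) i

/-- The `p`-th standard basis vector of `ℝ^p` (last coordinate equal to one). -/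
noncomputable def ep (p : ℕ) : Fin p → ℝ := fun i => if (i : ℕ) = p - 1 then 1 else 0

theorem HasSum.matrix_mulVec {X m n R : Type*} [Fintype n] [NonUnitalNonAssocSemiring R]
    [TopologicalSpace R] [IsTopologicalSemiring R] {f : X → Matrix m n R} {a : Matrix m n R}
    (hf : HasSum f a) (v : n → R) : HasSum (fun x => f x *ᵥ v) (a *ᵥ v) :=
  hf.map (mulVec.addMonoidHomLeft v) (continuous_id.matrix_mulVec continuous_const)

/-- The `ℓ∞` operator norm makes square matrices a complete normed algebra with the usual topology,
so the exponential series of a Banach algebra applies. -/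
theorem Matrix.hasSum_exp_series {ι : Type*} [Fintype ι] [DecidableEq ι] (M : Matrix ι ι ℝ) :
    HasSum (fun m => ((m ! : ℝ)⁻¹) • M ^ m) (NormedSpace.exp M) := by
  let _ := Matrix.linftyOpNormedRing (n := ι) (α := ℝ)
  let _ := Matrix.linftyOpNormedAlgebra (n := ι) (α := ℝ) (R := ℝ)
  have _ : @CompleteSpace (Matrix ι ι ℝ) PseudoMetricSpace.toUniformSpace :=
    FiniteDimensional.complete ℝ _
  exact NormedSpace.exp_series_hasSum_exp' M

theorem integral_pow_mul_one_sub_pow (a b : ℕ) :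
    ∫ x in (0:ℝ)..1, x ^ a * (1 - x) ^ b = a ! * b ! / (a + b + 1)! := by
  have hre (c : ℕ) : 0 < ((c : ℂ) + 1).re := by
    simp only [Complex.add_re, Complex.natCast_re, Complex.one_re]
    positivity
  have h := Complex.betaIntegral_eq_Gamma_mul_div (a + 1) (b + 1) (hre a) (hre b)
  have hadd : (a + 1 : ℂ) + (b + 1) = ((a + b + 1 : ℕ) : ℂ) + 1 := by push_cast; ring
  rw [hadd, Complex.Gamma_nat_eq_factorial, Complex.Gamma_nat_eq_factorial,
    Complex.Gamma_nat_eq_factorial, Complex.betaIntegral] at h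
  apply Complex.ofReal_injective
  rw [← intervalIntegral.integral_ofReal]
  push_cast at h ⊢
  simpa using h

theorem hasSum_phi {n : ℕ} (j : ℕ) (M : Matrix (Fin n) (Fin n) ℝ) :
    HasSum (fun m => (((m + j)! : ℝ)⁻¹) • M ^ m) (phi j M) := by
  rcases j with _ | k
  · simpa [phi] using M.hasSum_exp_series
  have hterm (m : ℕ) : ∫ θ in (0:ℝ)..1, (θ ^ k / k ! * (1 - θ) ^ m) • ((m ! : ℝ)⁻¹ • M ^ m)
      = ((m + (k + 1))! : ℝ)⁻¹ • M ^ m := by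
    simp_rw [intervalIntegral.integral_smul_const, div_mul_eq_mul_div,
      intervalIntegral.integral_div, integral_pow_mul_one_sub_pow, smul_smul,
      show k + m + 1 = m + (k + 1) by ring]
    field_simp
  rw [← funext hterm, phi, if_neg k.succ_ne_zero, Nat.add_sub_cancel]
  -- On `[0, 1]` the scalar weights are at most `1`, and in finite dimension the exponential
  -- series converges absolutely, which dominates the termwise integration.
  refine intervalIntegral.hasSum_integral_of_dominated_convergence
    (fun m _ => ‖(m ! : ℝ)⁻¹ • M ^ m‖) (fun m => by fun_prop) ?_ ?_ intervalIntegrable_const ?_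
  · refine fun m => Filter.Eventually.of_forall fun θ hθ => ?_
    rw [Set.uIoc_of_le zero_le_one] at hθ
    obtain ⟨hθ0, hθ1⟩ := hθ
    rw [norm_smul]
    refine mul_le_of_le_one_left (norm_nonneg _) ?_
    have hk : θ ^ k / k ! ≤ 1 :=
      div_le_one_of_le₀ ((pow_le_one₀ hθ0.le hθ1).trans (Nat.one_le_cast.mpr k.factorial_pos))
        (by positivity)
    have h1θ : 0 ≤ 1 - θ := by linarith
    rw [Real.norm_eq_abs, abs_of_nonneg (by positivity)]
    exact mul_le_one₀ hk (pow_nonneg h1θ m) (pow_le_one₀ h1θ (by linarith))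
  · exact Filter.Eventually.of_forall fun _ _ => summable_norm_iff.mpr M.hasSum_exp_series.summable
  · refine Filter.Eventually.of_forall fun θ _ => ?_
    have hseries := (((1 - θ) • M).hasSum_exp_series).const_smul (θ ^ k / k !)
    simp only [smul_pow, smul_smul] at hseries
    refine hseries.congr_fun fun m => ?_
    rw [smul_smul]
    ring_nf

theorem hasSum_pow_smul_phi_mulVec {n : ℕ} (j : ℕ) (M : Matrix (Fin n) (Fin n) ℝ) (τ : ℝ)
    (x : Fin n → ℝ) :
    HasSum (fun m => if j ≤ m then ((m ! : ℝ)⁻¹ * τ ^ m) • (M ^ (m - j) *ᵥ x) else 0)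
      (τ ^ j • (phi j (τ • M) *ᵥ x)) := by
  rw [← hasSum_nat_add_iff' j, Finset.sum_eq_zero fun m hm => if_neg (by rw [Finset.mem_range] at hm; omega),
    sub_zero]
  have h := ((hasSum_phi j (τ • M)).matrix_mulVec x).const_smul (τ ^ j)
  refine h.congr_fun fun m => ?_
  simp only [if_pos (Nat.le_add_left j m), Nat.add_sub_cancel, smul_pow, Matrix.smul_mulVec,
    smul_smul, pow_add]
  ring_nf

theorem Matrix.fromBlocks_zero₂₁_pow {l m α : Type*} [Fintype l] [Fintype m] [DecidableEq l]
    [DecidableEq m] [Semiring α] (A : Matrix l l α) (B : Matrix l m α) (K : Matrix m m α)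
    (n : ℕ) :
    fromBlocks A B 0 K ^ n
      = fromBlocks (A ^ n) (∑ k ∈ Finset.range n, A ^ (n - 1 - k) * B * K ^ k) 0 (K ^ n) := by
  induction n with
  | zero => simp [fromBlocks_one]
  | succ n ih =>
    rw [pow_succ', ih, fromBlocks_multiply, Finset.sum_range_succ, Matrix.mul_sum]
    simp only [Matrix.mul_zero, Matrix.zero_mul, add_zero, zero_add, ← pow_succ',
      Nat.add_sub_cancel, Nat.sub_self, pow_zero, Matrix.one_mul]
    congr 2
    refine Finset.sum_congr rfl fun k hkn => ?_
    rw [← Matrix.mul_assoc, ← Matrix.mul_assoc, ← pow_succ']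
    congr 3
    grind

theorem Ktilde_pow_mulVec_ep {p : ℕ} (k : ℕ) :
    Ktilde p ^ k *ᵥ ep p = fun i : Fin p => if (i : ℕ) + k = p - 1 then (1 : ℝ) else 0 := by
  induction k with
  | zero => ext i; simp [ep]
  | succ k ih =>
    ext i
    rw [pow_succ', ← mulVec_mulVec, ih]
    simp only [Ktilde, mulVec, dotProduct, of_apply, ite_mul, one_mul, zero_mul]
    rw [Fin.sum_univ_eq_sum_range (fun j => if j = (i : ℕ) + 1 then
      (if j + k = p - 1 then (1 : ℝ) else 0) else 0), Finset.sum_ite_eq']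
    simp only [Finset.mem_range]
    have := i.isLt
    split_ifs <;> first | rfl | omega

theorem Bmat_mulVec_Ktilde_pow_mulVec_ep {N p : ℕ} (b : ℕ → Fin N → ℝ) (k : ℕ) :
    Bmat p b *ᵥ (Ktilde p ^ k *ᵥ ep p) = if k < p then b (k + 1) else 0 := by
  ext i
  rw [Ktilde_pow_mulVec_ep]
  simp only [Bmat, mulVec, dotProduct, of_apply, mul_ite, mul_one, mul_zero]
  rw [Fin.sum_univ_eq_sum_range (fun j => if j + k = p - 1 then b (p - j) i else 0)]
  split_ifs with hk
  · rw [Finset.sum_eq_single (p - 1 - k)] <;> grind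
  · exact Finset.sum_eq_zero fun j hj => if_neg (by grind)

theorem fromBlocks_Bmat_Ktilde_pow_mulVec_inl {N p : ℕ} (A : Matrix (Fin N) (Fin N) ℝ)
    (b : ℕ → Fin N → ℝ) (n : ℕ) :
    (fromBlocks A (Bmat p b) 0 (Ktilde p) ^ n *ᵥ Sum.elim (b 0) (ep p)) ∘ Sum.inl
      = ∑ j ∈ Finset.range (p + 1), if j ≤ n then A ^ (n - j) *ᵥ b j else 0 := by
  rw [fromBlocks_zero₂₁_pow, fromBlocks_mulVec, Sum.elim_comp_inl, Sum.elim_comp_inl,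
    Sum.elim_comp_inr, sum_mulVec, Finset.sum_range_succ', if_pos n.zero_le, Nat.sub_zero,
    add_comm]
  congr 1
  have hcol (k : ℕ) : (A ^ (n - 1 - k) * Bmat p b * Ktilde p ^ k) *ᵥ ep p
      = if k < p then A ^ (n - (k + 1)) *ᵥ b (k + 1) else 0 := by
    rw [← mulVec_mulVec, ← mulVec_mulVec, Bmat_mulVec_Ktilde_pow_mulVec_ep, Nat.sub_sub, add_comm 1]
    split_ifs <;> simp
  simp only [hcol, ← Finset.sum_filter]
  refine Finset.sum_congr ?_ fun _ _ => rfl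
  ext k
  simp only [Finset.mem_filter, Finset.mem_range]
  omega

theorem stmt0_general {N p : ℕ} (A : Matrix (Fin N) (Fin N) ℝ)
    (b : ℕ → Fin N → ℝ) (τ : ℝ)
    (w : Fin N ⊕ Fin p → ℝ)
    (hw : w = (NormedSpace.exp
        (τ • Matrix.fromBlocks A (Bmat p b) 0 (Ktilde p))).mulVec
        (Sum.elim (b 0) (ep p))) :
    ∀ i : Fin N,
      w (Sum.inl i)
        = ∑ j ∈ Finset.range (p + 1), (τ ^ j • (phi j (τ • A)).mulVec (b j)) i := by
  intro i
  have hterm (n : ℕ) :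
      (((n ! : ℝ)⁻¹ • (τ • fromBlocks A (Bmat p b) 0 (Ktilde p)) ^ n) *ᵥ Sum.elim (b 0) (ep p))
          ∘ Sum.inl
        = ∑ j ∈ Finset.range (p + 1),
            if j ≤ n then ((n ! : ℝ)⁻¹ * τ ^ n) • (A ^ (n - j) *ᵥ b j) else 0 := by
    simp only [smul_pow, Matrix.smul_mulVec, Pi.smul_comp, fromBlocks_Bmat_Ktilde_pow_mulVec_inl,
      Finset.smul_sum, smul_ite, smul_zero, smul_smul]
  have hexp := (hasSum_exp_series (τ • fromBlocks A (Bmat p b) 0 (Ktilde p))).matrix_mulVec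
    (Sum.elim (b 0) (ep p))
  have htop := Pi.hasSum.mpr fun k => Pi.hasSum.mp hexp (Sum.inl k)
  have hphi := hasSum_sum fun j (_ : j ∈ Finset.range (p + 1)) =>
    hasSum_pow_smul_phi_mulVec j A τ (b j)
  rw [hw, ← Finset.sum_apply]
  exact congrFun (htop.unique (hphi.congr_fun hterm)) i

theorem stmt0 {N p : ℕ} (hp : 0 < p) (A : Matrix (Fin N) (Fin N) ℝ)
    (b : ℕ → Fin N → ℝ) (τ : ℝ)
    (w : Fin N ⊕ Fin p → ℝ)
    (hw : w = (NormedSpace.exp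
        (τ • Matrix.fromBlocks A (Bmat p b) 0 (Ktilde p))).mulVec
        (Sum.elim (b 0) (ep p))) :
    ∀ i : Fin N,
      w (Sum.inl i)
        = ∑ j ∈ Finset.range (p + 1), (τ ^ j • (phi j (τ • A)).mulVec (b j)) i :=
  stmt0_general A b τ w hw
end

section
/- Let Ã be a real n×n matrix, let v ∈ ℝ^n be nonzero, and suppose there are a real n×m matrix V_m, a real m×m upper Hessenberg matrix H_m (i.e. H_m(i, j) = 0 whenever i > j+1), a vector v_{m+1} ∈ ℝ^n, and a scalar h_{m+1,m} ∈ ℝ such that Ã V_m = V_m H_m + h_{m+1,m} v_{m+1} e_m^T and the first column of V_m equals v/‖v‖, where e_m is the m-th standard basis vector of ℝ^m. Then for every polynomial P of degree strictly less than m − 1, one has P(Ã) v = ‖v‖ V_m P(H_m) e_1, where e_1 is the first standard basis vector of ℝ^m. -/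
open Matrix

/-- The Euclidean norm of a vector in `ℝ^n`. -/
noncomputable def euclNorm {n : ℕ} (v : Fin n → ℝ) : ℝ :=
  ‖(WithLp.equiv 2 (Fin n → ℝ)).symm v‖

private lemma sum_mulVec' {ι α β : Type*} [Fintype β] (s : Finset ι)
    (f : ι → Matrix α β ℝ) (v : β → ℝ) :
    (∑ i ∈ s, f i) *ᵥ v = ∑ i ∈ s, (f i) *ᵥ v := by
  induction s using Finset.cons_induction with
  | empty => simp [Matrix.zero_mulVec]
  | cons a s ha ih => simp [Finset.sum_cons, Matrix.add_mulVec, ih]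

theorem stmt5 {n m : ℕ} (hm : 0 < m) (Atil : Matrix (Fin n) (Fin n) ℝ)
    (v : Fin n → ℝ) (hv : v ≠ 0)
    (V : Matrix (Fin n) (Fin m) ℝ) (H : Matrix (Fin m) (Fin m) ℝ)
    (hHess : ∀ i j : Fin m, (j : ℕ) + 1 < (i : ℕ) → H i j = 0)
    (vnext : Fin n → ℝ) (h : ℝ)
    (hfact : Atil * V = V * H + h • Matrix.vecMulVec vnext
      (fun j : Fin m => if (j : ℕ) = m - 1 then (1 : ℝ) else 0))
    (hcol : ∀ i, V i ⟨0, hm⟩ = v i / euclNorm v)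
    (P : Polynomial ℝ) (hdeg : P.degree < ((m - 1 : ℕ) : WithBot ℕ)) :
    (Polynomial.aeval Atil P).mulVec v
      = euclNorm v • V.mulVec ((Polynomial.aeval H P).mulVec
          (fun j : Fin m => if (j : ℕ) = 0 then (1 : ℝ) else 0)) := by
  set e1 : Fin m → ℝ := fun j : Fin m => if (j : ℕ) = 0 then (1 : ℝ) else 0 with he1
  set em : Fin m → ℝ := fun j : Fin m => if (j : ℕ) = m - 1 then (1 : ℝ) else 0 with hem
  have hnorm : euclNorm v ≠ 0 := by
    simp only [euclNorm, ne_eq, norm_eq_zero]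
    intro hc
    exact hv (by simpa using congrArg (WithLp.equiv 2 (Fin n → ℝ)) hc)
  -- support lemma
  have hsupp : ∀ k : ℕ, ∀ i : Fin m, k < (i : ℕ) → ((H ^ k) *ᵥ e1) i = 0 := by
    intro k
    induction k with
    | zero =>
      intro i hi
      simp only [pow_zero, Matrix.one_mulVec, he1]
      rw [if_neg (by omega)]
    | succ k ih =>
      intro i hi
      have hpow : (H ^ (k + 1)) *ᵥ e1 = H *ᵥ ((H ^ k) *ᵥ e1) := by
        rw [Matrix.mulVec_mulVec, ← pow_succ']
      rw [hpow]
      show (∑ j, H i j * ((H ^ k) *ᵥ e1) j) = 0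
      apply Finset.sum_eq_zero
      intro j _
      by_cases hj : (j : ℕ) + 1 < (i : ℕ)
      · rw [hHess i j hj, zero_mul]
      · rw [ih j (by omega), mul_zero]
  have key : ∀ k : ℕ, k ≤ m - 1 →
      (Atil ^ k) *ᵥ v = euclNorm v • V *ᵥ ((H ^ k) *ᵥ e1) := by
    intro k
    induction k with
    | zero =>
      intro _
      have hV1 : V *ᵥ e1 = fun i => v i / euclNorm v := by
        funext i
        have hterm : ∀ j : Fin m, V i j * e1 j = if j = ⟨0, hm⟩ then V i j else 0 := by
          intro j
          simp only [he1, Fin.ext_iff]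
          split <;> simp_all
        show (∑ j, V i j * e1 j) = v i / euclNorm v
        simp only [hterm, Finset.sum_ite_eq' Finset.univ (⟨0, hm⟩ : Fin m),
          Finset.mem_univ, if_true]
        exact hcol i
      rw [pow_zero, pow_zero, Matrix.one_mulVec, Matrix.one_mulVec, hV1]
      funext i
      simp only [Pi.smul_apply, smul_eq_mul]
      field_simp
    | succ k ih =>
      intro hk
      have hk' : k ≤ m - 1 := Nat.le_of_succ_le hk
      have hstep : (Atil ^ (k + 1)) *ᵥ v = Atil *ᵥ ((Atil ^ k) *ᵥ v) := by
        rw [Matrix.mulVec_mulVec, ← pow_succ']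
      rw [hstep, ih hk', Matrix.mulVec_smul, Matrix.mulVec_mulVec, hfact]
      set x : Fin m → ℝ := (H ^ k) *ᵥ e1 with hx
      have hzero : (∑ j, em j * x j) = 0 := by
        apply Finset.sum_eq_zero
        intro j _
        by_cases hj : (j : ℕ) = m - 1
        · rw [hx, hsupp k j (by omega), mul_zero]
        · simp [hem, hj]
      have hvmv : (Matrix.vecMulVec vnext em) *ᵥ x = 0 := by
        funext i
        show (∑ j, vnext i * em j * x j) = 0
        calc (∑ j, vnext i * em j * x j) = vnext i * ∑ j, em j * x j := by
              rw [Finset.mul_sum]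
              exact Finset.sum_congr rfl (fun j _ => by ring)
          _ = 0 := by rw [hzero, mul_zero]
      rw [Matrix.add_mulVec, Matrix.smul_mulVec, hvmv, smul_zero, add_zero]
      congr 1
      have hmm : V * H * H ^ k = V * H ^ (k + 1) := by rw [Matrix.mul_assoc, ← pow_succ']
      rw [Matrix.mulVec_mulVec, Matrix.mulVec_mulVec, hmm]
  -- assemble
  by_cases hP : P = 0
  · simp [hP]
  have hnd : P.natDegree < m - 1 := (Polynomial.natDegree_lt_iff_degree_lt hP).mpr hdeg
  rw [Polynomial.aeval_eq_sum_range (x := Atil), Polynomial.aeval_eq_sum_range (x := H)]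
  have hL : (∑ i ∈ Finset.range (P.natDegree + 1), P.coeff i • Atil ^ i) *ᵥ v
      = ∑ i ∈ Finset.range (P.natDegree + 1), P.coeff i • ((Atil ^ i) *ᵥ v) := by
    rw [sum_mulVec']
    exact Finset.sum_congr rfl (fun i _ => Matrix.smul_mulVec _ _ _)
  have hR : (∑ i ∈ Finset.range (P.natDegree + 1), P.coeff i • H ^ i) *ᵥ e1
      = ∑ i ∈ Finset.range (P.natDegree + 1), P.coeff i • ((H ^ i) *ᵥ e1) := by
    rw [sum_mulVec']
    exact Finset.sum_congr rfl (fun i _ => Matrix.smul_mulVec _ _ _)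
  rw [hL, hR]
  have hV : V *ᵥ (∑ i ∈ Finset.range (P.natDegree + 1), P.coeff i • ((H ^ i) *ᵥ e1))
      = ∑ i ∈ Finset.range (P.natDegree + 1), P.coeff i • (V *ᵥ ((H ^ i) *ᵥ e1)) := by
    rw [← Matrix.mulVecLin_apply, map_sum]
    exact Finset.sum_congr rfl fun i _ => by rw [_root_.map_smul]; rfl
  rw [hV, Finset.smul_sum]
  apply Finset.sum_congr rfl
  intro i hi
  rw [key i (by have := Finset.mem_range.mp hi; omega), smul_comm]
end

section
/- Let Ã be a real n×n matrix, let v ∈ ℝ^n be nonzero, and suppose there are a real n×m matrix V_m, a real m×m upper Hessenberg matrix H_m, a vector v_{m+1} ∈ ℝ^n, and a scalar h_{m+1,m} ∈ ℝ such that Ã V_m = V_m H_m + h_{m+1,m} v_{m+1} e_m^T and the first column of V_m equals v/‖v‖. Then for every integer j with 0 ≤ j ≤ m − 1, one has Ã^j v = ‖v‖ V_m H_m^j e_1, where e_1 and e_m are the first and last standard basis vectors of ℝ^m. -/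
open Matrix

lemma euclNorm_ne_zero {n : ℕ} {v : Fin n → ℝ} (hv : v ≠ 0) : euclNorm v ≠ 0 := by
  simp only [euclNorm, norm_ne_zero_iff]
  intro hh
  apply hv
  have := congrArg (WithLp.equiv 2 (Fin n → ℝ)) hh
  simpa using this

lemma hess_pow {m : ℕ} (H : Matrix (Fin m) (Fin m) ℝ)
    (hHess : ∀ i j : Fin m, (j : ℕ) + 1 < (i : ℕ) → H i j = 0) :
    ∀ j : ℕ, ∀ i k : Fin m, (k : ℕ) + j < (i : ℕ) → (H ^ j) i k = 0 := by
  intro j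
  induction j with
  | zero =>
    intro i k hik
    rw [pow_zero]
    exact Matrix.one_apply_ne (by omega : i ≠ k)
  | succ j ih =>
    intro i k hik
    rw [pow_succ, Matrix.mul_apply]
    apply Finset.sum_eq_zero
    intro l _
    by_cases hl : (k : ℕ) + 1 < (l : ℕ)
    · rw [hHess l k hl, mul_zero]
    · rw [ih i l (by omega), zero_mul]

theorem stmt6 {n m : ℕ} (hm : 0 < m) (Atil : Matrix (Fin n) (Fin n) ℝ)
    (v : Fin n → ℝ) (hv : v ≠ 0)
    (V : Matrix (Fin n) (Fin m) ℝ) (H : Matrix (Fin m) (Fin m) ℝ)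
    (hHess : ∀ i j : Fin m, (j : ℕ) + 1 < (i : ℕ) → H i j = 0)
    (vnext : Fin n → ℝ) (h : ℝ)
    (hfact : Atil * V = V * H + h • Matrix.vecMulVec vnext
      (fun j : Fin m => if (j : ℕ) = m - 1 then (1 : ℝ) else 0))
    (hcol : ∀ i, V i ⟨0, hm⟩ = v i / euclNorm v) :
    ∀ j : ℕ, j ≤ m - 1 →
      (Atil ^ j).mulVec v
        = euclNorm v • V.mulVec ((H ^ j).mulVec
            (fun k : Fin m => if (k : ℕ) = 0 then (1 : ℝ) else 0)) := by
  intro j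
  induction j with
  | zero =>
    intro _
    rw [pow_zero, pow_zero, Matrix.one_mulVec]
    funext i
    rw [Matrix.one_mulVec]
    simp only [Pi.smul_apply, smul_eq_mul, Matrix.mulVec, dotProduct]
    rw [Finset.sum_eq_single ⟨0, hm⟩]
    · simp [hcol i, div_eq_iff (euclNorm_ne_zero hv)]
      field_simp [euclNorm_ne_zero hv]
    · intro b _ hb
      have : (b : ℕ) ≠ 0 := fun hb0 => hb (Fin.ext hb0)
      simp [this]
    · simp
  | succ j ih =>
    intro hj
    have hj' : j ≤ m - 1 := by omega
    rw [pow_succ', ← Matrix.mulVec_mulVec, ih hj', Matrix.mulVec_smul,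
      Matrix.mulVec_mulVec, hfact]
    congr 1
    rw [Matrix.add_mulVec, Matrix.smul_mulVec]
    have hzero : (Matrix.vecMulVec vnext
        (fun j : Fin m => if (j : ℕ) = m - 1 then (1 : ℝ) else 0)).mulVec
        ((H ^ j).mulVec (fun k : Fin m => if (k : ℕ) = 0 then (1 : ℝ) else 0)) = 0 := by
      funext i
      simp only [Matrix.mulVec, dotProduct, Matrix.vecMulVec_apply, Pi.zero_apply]
      apply Finset.sum_eq_zero
      intro l _
      by_cases hl : (l : ℕ) = m - 1
      · have h1 : (∑ x : Fin m, (H ^ j) l x * if (x : ℕ) = 0 then (1 : ℝ) else 0) = 0 := by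
          apply Finset.sum_eq_zero
          intro k _
          by_cases hk : (k : ℕ) = 0
          · rw [hess_pow H hHess j l k (by omega), zero_mul]
          · simp [hk]
        rw [h1, mul_zero]
      · simp [hl]
    rw [hzero, smul_zero, add_zero, Matrix.mulVec_mulVec, Matrix.mul_assoc, ← pow_succ', Matrix.mulVec_mulVec]
end

section
/- Let H be a real m×m matrix, let c ∈ ℝ^m, let τ ∈ ℝ, and let H̃ be the (m+1)×(m+1) block matrix [[H, c], [0, 0]]. Then e^{τH̃} = [[e^{τH}, τ φ_1(τH) c], [0, 1]]; that is, the top-left m×m block of e^{τH̃} is e^{τH}, the top-right column is τ φ_1(τH) c, the bottom-left row is zero, and the bottom-right entry is 1. -/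
open Matrix MeasureTheory
open scoped Nat

attribute [local instance] Matrix.normedAddCommGroup Matrix.normedSpace

/-!
Since the last block row of `X = [[A, C], [0, 0]]` vanishes, `X^(k+1) = [[A^(k+1), A^k C], [0, 0]]`,
so the exponential series of `X` can be summed block by block: the top-right block is
`∑ₖ A^k C / (k+1)!`. Integrating the exponential series of `e^{(1-θ)A}` term by term, using
`∫₀¹ (1-θ)^k dθ = 1/(k+1)`, shows that `∑ₖ A^k / (k+1)! = φ₁(A)`.
-/

theorem HasSum.matrix_fromBlocks {ι l m n o R : Type*} [AddCommMonoid R] [TopologicalSpace R]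
    {a : ι → Matrix n l R} {b : ι → Matrix n m R} {c : ι → Matrix o l R}
    {d : ι → Matrix o m R} {A : Matrix n l R} {B : Matrix n m R} {C : Matrix o l R}
    {D : Matrix o m R} (ha : HasSum a A) (hb : HasSum b B) (hc : HasSum c C) (hd : HasSum d D) :
    HasSum (fun i => fromBlocks (a i) (b i) (c i) (d i)) (fromBlocks A B C D) := by
  refine Pi.hasSum.mpr ?_
  rintro (i | i) <;> refine Pi.hasSum.mpr ?_ <;> rintro (j | j)
  exacts [Pi.hasSum.mp (Pi.hasSum.mp ha i) j, Pi.hasSum.mp (Pi.hasSum.mp hb i) j,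
    Pi.hasSum.mp (Pi.hasSum.mp hc i) j, Pi.hasSum.mp (Pi.hasSum.mp hd i) j]

namespace Matrix

variable {l : Type*} [Fintype l] [DecidableEq l]

/-- `exp` only depends on the topology, so any normed-algebra structure may be used to sum it. -/
theorem exp_series_hasSum_exp {𝕂 : Type*} [RCLike 𝕂] (A : Matrix l l 𝕂) :
    HasSum (fun k => (k !⁻¹ : 𝕂) • A ^ k) (NormedSpace.exp A) :=
  open scoped Norms.Operator in NormedSpace.exp_series_hasSum_exp' A

variable {o : Type*} [Fintype o] [DecidableEq o]

theorem fromBlocks_zero_zero_pow_succ {R : Type*} [Ring R] (A : Matrix l l R) (C : Matrix l o R)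
    (k : ℕ) :
    fromBlocks A C 0 0 ^ (k + 1) = fromBlocks (A ^ (k + 1)) (A ^ k * C) 0 (0 : Matrix o o R) := by
  induction k with
  | zero => simp
  | succ k ih => rw [pow_succ, ih, fromBlocks_multiply]; simp [pow_succ]

theorem exp_fromBlocks_zero_zero {𝕂 : Type*} [RCLike 𝕂] (A : Matrix l l 𝕂) (C : Matrix l o 𝕂)
    {P : Matrix l l 𝕂} (hP : HasSum (fun k => ((k + 1)! : 𝕂)⁻¹ • A ^ k) P) :
    NormedSpace.exp (fromBlocks A C 0 0) =
      fromBlocks (NormedSpace.exp A) (P * C) 0 (1 : Matrix o o 𝕂) := by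
  set X : Matrix (l ⊕ o) (l ⊕ o) 𝕂 := fromBlocks A C 0 0
  have hX : HasSum (fun k => ((k + 1)! : 𝕂)⁻¹ • X ^ (k + 1)) (NormedSpace.exp X - 1) := by
    simpa using (hasSum_nat_add_iff' 1).mpr (exp_series_hasSum_exp X)
  have hA : HasSum (fun k => ((k + 1)! : 𝕂)⁻¹ • A ^ (k + 1)) (NormedSpace.exp A - 1) := by
    simpa using (hasSum_nat_add_iff' 1).mpr (exp_series_hasSum_exp A)
  have hblocks : HasSum (fun k => ((k + 1)! : 𝕂)⁻¹ • X ^ (k + 1))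
      (fromBlocks (NormedSpace.exp A - 1) (P * C) 0 0) := by
    simp_rw [X, fromBlocks_zero_zero_pow_succ, fromBlocks_smul, smul_zero, ← smul_mul]
    exact hA.matrix_fromBlocks (hP.map (addMonoidHomMulRight C)
      (continuous_id.matrix_mul continuous_const)) hasSum_zero hasSum_zero
  calc NormedSpace.exp X = (NormedSpace.exp X - 1) + 1 := (sub_add_cancel _ _).symm
    _ = fromBlocks (NormedSpace.exp A - 1) (P * C) 0 0 + fromBlocks 1 0 0 1 := by
      rw [hX.unique hblocks, fromBlocks_one]
    _ = fromBlocks (NormedSpace.exp A) (P * C) 0 1 := by rw [fromBlocks_add]; simp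

end Matrix

theorem integral_one_sub_pow (k : ℕ) : ∫ θ in (0 : ℝ)..1, (1 - θ) ^ k = ((k : ℝ) + 1)⁻¹ := by
  simp [intervalIntegral.integral_comp_sub_left (fun x : ℝ => x ^ k)]

theorem hasSum_phi_one {n : ℕ} (M : Matrix (Fin n) (Fin n) ℝ) :
    HasSum (fun k => ((k + 1)! : ℝ)⁻¹ • M ^ k) (phi 1 M) := by
  have hphi : phi 1 M = ∫ θ in (0 : ℝ)..1, NormedSpace.exp ((1 - θ) • M) := by simp [phi]
  have hterm (k : ℕ) :
      ∫ θ in (0 : ℝ)..1, (k !⁻¹ : ℝ) • ((1 - θ) • M) ^ k = ((k + 1)! : ℝ)⁻¹ • M ^ k := by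
    simp_rw [smul_pow, smul_smul]
    rw [intervalIntegral.integral_smul_const, intervalIntegral.integral_const_mul,
      integral_one_sub_pow, Nat.factorial_succ, Nat.cast_mul, mul_inv, mul_comm]
    push_cast
    rfl
  have hbound (k : ℕ) (θ : ℝ) (hθ : θ ∈ Set.uIoc (0 : ℝ) 1) :
      ‖(k !⁻¹ : ℝ) • ((1 - θ) • M) ^ k‖ ≤ ‖(k !⁻¹ : ℝ) • M ^ k‖ := by
    rw [Set.uIoc_of_le zero_le_one] at hθ
    rw [smul_pow, smul_comm, norm_smul, Real.norm_eq_abs, abs_pow]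
    refine mul_le_of_le_one_left (norm_nonneg _) (pow_le_one₀ (abs_nonneg _) ?_)
    rw [abs_le]; constructor <;> linarith [hθ.1, hθ.2]
  rw [hphi, ← funext hterm]
  exact intervalIntegral.hasSum_integral_of_dominated_convergence
    (fun k _ => ‖(k !⁻¹ : ℝ) • M ^ k‖) (fun k => by fun_prop) (fun k => .of_forall (hbound k))
    (.of_forall fun _ _ => summable_norm_iff.mpr (exp_series_hasSum_exp M).summable)
    intervalIntegrable_const (.of_forall fun θ _ => exp_series_hasSum_exp _)

theorem stmt8 {m : ℕ} (H : Matrix (Fin m) (Fin m) ℝ) (c : Fin m → ℝ) (τ : ℝ) :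
    NormedSpace.exp
        (τ • Matrix.fromBlocks H (Matrix.of fun i (_ : Fin 1) => c i) 0 0)
      = Matrix.fromBlocks (NormedSpace.exp (τ • H))
          (Matrix.of fun i (_ : Fin 1) => (τ • (phi 1 (τ • H)).mulVec c) i)
          (0 : Matrix (Fin 1) (Fin m) ℝ) (1 : Matrix (Fin 1) (Fin 1) ℝ) := by
  rw [fromBlocks_smul, smul_zero, smul_zero,
    exp_fromBlocks_zero_zero _ _ (hasSum_phi_one (τ • H))]
  congr 1
  change _ = replicateCol (Fin 1) (τ • phi 1 (τ • H) *ᵥ c)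
  rw [replicateCol_smul, replicateCol_mulVec, Matrix.mul_smul]
  rfl
end

section
/- Let Ã be a real n×n matrix, let v ∈ ℝ^n be nonzero, and suppose there are a real n×m matrix V_m and a real m×m upper Hessenberg matrix H_m such that Ã V_m = V_m H_m (i.e. the Krylov factorization holds with residual term h_{m+1,m} = 0, the 'happy breakdown' case) and the first column of V_m equals v/‖v‖. Then for every τ ∈ ℝ, the Krylov approximation is exact: e^{τÃ} v = ‖v‖ V_m e^{τH_m} e_1, where e_1 is the first standard basis vector of ℝ^m. -/
open Matrix

/-!
Since `Ã V = V H`, induction gives `Ãᵏ V = V Hᵏ` for all `k`, and summing the exponential series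
termwise yields `e^{τÃ} V = V e^{τH}`. As `v = ‖v‖ V e₁`, applying this to `‖v‖ e₁` gives the
formula.
-/

namespace Matrix

variable {m n : Type*} [Fintype m] [Fintype n]

theorem pow_mul_eq_mul_pow_of_mul_eq {R : Type*} [Semiring R] [DecidableEq m] [DecidableEq n]
    {A : Matrix m m R} {V : Matrix m n R} {H : Matrix n n R} (h : A * V = V * H) (k : ℕ) :
    A ^ k * V = V * H ^ k := by
  induction k with
  | zero => simp
  | succ k ih => rw [pow_succ', pow_succ', Matrix.mul_assoc, ih, ← Matrix.mul_assoc, h,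
      Matrix.mul_assoc]

attribute [local instance] Matrix.linftyOpNormedRing Matrix.linftyOpNormedAlgebra in
theorem exp_mul_eq_mul_exp_of_mul_eq {𝕂 : Type*} [RCLike 𝕂] [DecidableEq m] [DecidableEq n]
    {A : Matrix m m 𝕂} {V : Matrix m n 𝕂} {H : Matrix n n 𝕂} (h : A * V = V * H) :
    NormedSpace.exp A * V = V * NormedSpace.exp H := by
  have hA : HasSum (fun k => ((k.factorial : 𝕂)⁻¹ • A ^ k) * V) (NormedSpace.exp A * V) :=
    (NormedSpace.exp_series_hasSum_exp' A).map (addMonoidHomMulRight V)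
      (continuous_id.matrix_mul continuous_const)
  have hH : HasSum (fun k => V * ((k.factorial : 𝕂)⁻¹ • H ^ k)) (V * NormedSpace.exp H) :=
    (NormedSpace.exp_series_hasSum_exp' H).map (addMonoidHomMulLeft V)
      (continuous_const.matrix_mul continuous_id)
  simp only [Matrix.smul_mul, Matrix.mul_smul, pow_mul_eq_mul_pow_of_mul_eq h] at hA hH
  exact hA.unique hH

end Matrix

theorem euclNorm_eq_zero_iff {n : ℕ} {v : Fin n → ℝ} : euclNorm v = 0 ↔ v = 0 := by
  simp [euclNorm]

theorem stmt12_general {n m : ℕ} (hm : 0 < m) (Atil : Matrix (Fin n) (Fin n) ℝ)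
    (v : Fin n → ℝ)
    (V : Matrix (Fin n) (Fin m) ℝ) (H : Matrix (Fin m) (Fin m) ℝ)
    (hfact : Atil * V = V * H)
    (hcol : ∀ i, V i ⟨0, hm⟩ = v i / euclNorm v) :
    ∀ τ : ℝ,
      (NormedSpace.exp (τ • Atil)).mulVec v
        = euclNorm v • V.mulVec ((NormedSpace.exp (τ • H)).mulVec
            (fun k : Fin m => if (k : ℕ) = 0 then (1 : ℝ) else 0)) := by
  intro τ
  have he₁ : (fun k : Fin m => if (k : ℕ) = 0 then (1 : ℝ) else 0) = Pi.single ⟨0, hm⟩ 1 := by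
    ext k
    simp [Pi.single_apply, Fin.ext_iff]
  have hv : v = euclNorm v • V *ᵥ Pi.single ⟨0, hm⟩ 1 := by
    ext i
    rw [Pi.smul_apply, mulVec_single_one, col_apply, hcol, smul_eq_mul,
      mul_div_cancel_of_imp' fun h => by rw [euclNorm_eq_zero_iff.1 h, Pi.zero_apply]]
  have hexp : NormedSpace.exp (τ • Atil) * V = V * NormedSpace.exp (τ • H) :=
    exp_mul_eq_mul_exp_of_mul_eq (by rw [Matrix.smul_mul, hfact, Matrix.mul_smul])
  rw [he₁]
  conv_lhs => rw [hv]
  rw [mulVec_smul, mulVec_mulVec, hexp, ← mulVec_mulVec]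

theorem stmt12 {n m : ℕ} (hm : 0 < m) (Atil : Matrix (Fin n) (Fin n) ℝ)
    (v : Fin n → ℝ) (hv : v ≠ 0)
    (V : Matrix (Fin n) (Fin m) ℝ) (H : Matrix (Fin m) (Fin m) ℝ)
    (hHess : ∀ i j : Fin m, (j : ℕ) + 1 < (i : ℕ) → H i j = 0)
    (hfact : Atil * V = V * H)
    (hcol : ∀ i, V i ⟨0, hm⟩ = v i / euclNorm v) :
    ∀ τ : ℝ,
      (NormedSpace.exp (τ • Atil)).mulVec v
        = euclNorm v • V.mulVec ((NormedSpace.exp (τ • H)).mulVec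
            (fun k : Fin m => if (k : ℕ) = 0 then (1 : ℝ) else 0)) :=
  stmt12_general hm Atil v V H hfact hcol
end
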